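/- Assume (H1), (H2), (H3) and (H4)(2), and let γ ∈ (0, 2/L). For any Lipschitz function φ : ℝ^d → ℝ, the function ψ_γ(θ) = Σ_{i=0}^∞ (R_γ^i φ(θ) − π_γ(φ)) is well-defined (the series converges), Lipschitz, and satisfies (Id − R_γ)ψ_γ = φ − π_γ(φ) and π_γ(ψ_γ) = 0. Moreover, if ψ̃_γ : ℝ^d → ℝ is any other Lipschitz function satisfying (Id − R_γ)ψ̃_γ = φ − π_γ(φ) and π_γ(ψ̃_γ) = 0, then ψ̃_γ = ψ_γ. -/

import Mathlib

open MeasureTheory ProbabilityTheory Filter Finset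
open scoped ENNReal NNReal RealInnerProductSpace Topology

noncomputable section

namespace SGDFormal

/-- The state space `ℝ^d`. -/
abbrev Vec (d : ℕ) := EuclideanSpace ℝ (Fin d)

variable {d q : ℕ} {Ω : Type*} [MeasurableSpace Ω]

/-- The outer product `v wᵀ` as a continuous linear map, `(v wᵀ) x = ⟪w, x⟫ v`. -/
def outer (v : Vec q) (w : Vec d) : Vec d →L[ℝ] Vec q :=
  (innerSL ℝ w).smulRight v

/-- The SGD iterates `θ_k^{(γ)}`, started at the deterministic point `θ0`:
`θ_{k+1} = θ_k - γ (f'(θ_k) + ε_{k+1}(θ_k))`. -/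
def sgd (f' : Vec d → Vec d) (ε : ℕ → Vec d → Ω → Vec d) (γ : ℝ) (θ0 : Vec d) :
    ℕ → Ω → Vec d
  | 0 => fun _ => θ0
  | k + 1 => fun ω =>
      sgd f' ε γ θ0 k ω - γ • (f' (sgd f' ε γ θ0 k ω) + ε (k + 1) (sgd f' ε γ θ0 k ω) ω)

/-- The one-step Markov kernel of SGD: `R_γ(θ, ·)` is the law of `θ - γ(f'(θ) + ε_1(θ))`. -/
def Rstep (P : Measure Ω) (f' : Vec d → Vec d) (ε : ℕ → Vec d → Ω → Vec d) (γ : ℝ)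
    (θ : Vec d) : Measure (Vec d) :=
  P.map fun ω => θ - γ • (f' θ + ε 1 θ ω)

/-- The `k`-step kernel `R_γ^k`. -/
def Riter (P : Measure Ω) (f' : Vec d → Vec d) (ε : ℕ → Vec d → Ω → Vec d) (γ : ℝ) :
    ℕ → Vec d → Measure (Vec d)
  | 0 => fun θ => Measure.dirac θ
  | k + 1 => fun θ => (Riter P f' ε γ k θ).bind (Rstep P f' ε γ)

/-- `π` is a stationary (invariant) probability measure for the kernel `R_γ`. -/
def IsStationary (P : Measure Ω) (f' : Vec d → Vec d) (ε : ℕ → Vec d → Ω → Vec d)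
    (γ : ℝ) (π : Measure (Vec d)) : Prop :=
  π.bind (Rstep P f' ε γ) = π

/-- `π` has a finite second moment. -/
def FiniteSecondMoment (π : Measure (Vec d)) : Prop :=
  ∫⁻ θ, (‖θ‖₊ : ℝ≥0∞) ^ 2 ∂π < ⊤

/-- Squared Wasserstein distance of order 2 (as an infimum over couplings). -/
def W2sq (μ ν : Measure (Vec d)) : ℝ :=
  sInf {r : ℝ | ∃ ξ : Measure (Vec d × Vec d), IsProbabilityMeasure ξ ∧
    ξ.map Prod.fst = μ ∧ ξ.map Prod.snd = ν ∧ r = ∫ p, ‖p.1 - p.2‖ ^ 2 ∂ξ}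

/-- Poisson solution `ψ_γ(θ) = Σ_{i=0}^∞ (R_γ^i φ(θ) − π(φ))`. -/
def poisson {F : Type*} [NormedAddCommGroup F] [NormedSpace ℝ F]
    (P : Measure Ω) (f' : Vec d → Vec d) (ε : ℕ → Vec d → Ω → Vec d) (γ : ℝ)
    (π : Measure (Vec d)) (φ : Vec d → F) (θ : Vec d) : F :=
  ∑' i : ℕ, (∫ ϑ, φ ϑ ∂(Riter P f' ε γ i θ) - ∫ ϑ, φ ϑ ∂π)

/-- Noise covariance `C(θ) = E[ε_1(θ)^{⊗2}]`. -/
def noiseCov (P : Measure Ω) (ε : ℕ → Vec d → Ω → Vec d) (θ : Vec d) :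
    Vec d →L[ℝ] Vec d :=
  ∫ ω, outer (ε 1 θ ω) (ε 1 θ ω) ∂P

/-- (H1): `f` is strongly convex with constant `m`. -/
def StrongConvexC (f : Vec d → ℝ) (m : ℝ) : Prop :=
  ∀ θ₁ θ₂ : Vec d, ∀ t : ℝ, t ∈ Set.Icc (0 : ℝ) 1 →
    f (t • θ₁ + (1 - t) • θ₂) ≤
      t * f θ₁ + (1 - t) * f θ₂ - m / 2 * (t * (1 - t)) * ‖θ₁ - θ₂‖ ^ 2

/-- (H2): `f` is `C^5`, with bounded 2nd–5th derivatives; `f'` is the gradient of `f`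
and is `L`-Lipschitz. -/
def H2 (f : Vec d → ℝ) (f' : Vec d → Vec d) (L : ℝ) : Prop :=
  ContDiff ℝ 5 f ∧ (∀ θ, HasGradientAt f (f' θ) θ) ∧
    (∀ i : ℕ, 2 ≤ i → i ≤ 5 → ∃ B : ℝ, ∀ θ, ‖iteratedFDeriv ℝ i f θ‖ ≤ B) ∧
    ∀ θ₁ θ₂ : Vec d, ‖f' θ₁ - f' θ₂‖ ≤ L * ‖θ₁ - θ₂‖

/-- `θstar` is a (the) global minimizer of `f`. -/
def IsMinimizer (f : Vec d → ℝ) (θstar : Vec d) : Prop :=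
  ∀ θ, f θstar ≤ f θ

/-- (H3): `(ℱ_k)` is a filtration, `ε_{k+1}(θ)` is `ℱ_{k+1}`-measurable with zero conditional
expectation given `ℱ_k`, and the random fields `(ε_k)_{k ≥ 1}` are i.i.d. -/
def H3 (P : Measure Ω) (ℱ : ℕ → MeasurableSpace Ω) (ε : ℕ → Vec d → Ω → Vec d) : Prop :=
  (∀ k, ℱ k ≤ ℱ (k + 1)) ∧ (∀ k, ℱ k ≤ (inferInstance : MeasurableSpace Ω)) ∧
    (∀ (k : ℕ) (θ : Vec d), Measurable[ℱ (k + 1)] (ε (k + 1) θ)) ∧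
    (∀ (k : ℕ) (θ : Vec d), P[ε (k + 1) θ|ℱ k] =ᵐ[P] 0) ∧
    (iIndepFun (m := fun _ : ℕ => MeasurableSpace.pi)
      (fun (k : ℕ) (ω : Ω) (θ : Vec d) => ε (k + 1) θ ω) P) ∧
    ∀ j k : ℕ, IdentDistrib (fun (ω : Ω) (θ : Vec d) => ε (j + 1) θ ω)
      (fun (ω : Ω) (θ : Vec d) => ε (k + 1) θ ω) P P

/-- (H4)(p): a.s. `L`-co-coercivity of `f'_k = f' + ε_k` and a `p`-th moment bound `τ` on the
noise at the optimum. -/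
def H4 (P : Measure Ω) (f' : Vec d → Vec d) (ε : ℕ → Vec d → Ω → Vec d)
    (θstar : Vec d) (L : ℝ) (p : ℕ) (τ : ℝ) : Prop :=
  (∀ k : ℕ, 1 ≤ k → ∀ᵐ ω ∂P, ∀ θ η : Vec d,
      ‖(f' θ + ε k θ ω) - (f' η + ε k η ω)‖ ^ 2 ≤
        L * ⟪(f' θ + ε k θ ω) - (f' η + ε k η ω), θ - η⟫) ∧
    0 ≤ τ ∧ ∀ k : ℕ, 1 ≤ k →
      (∫⁻ ω, (‖ε k θstar ω‖₊ : ℝ≥0∞) ^ p ∂P) ≤ ENNReal.ofReal (τ ^ p)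

end SGDFormal

/-!
For `γ < 2/L`, almost sure co-coercivity of the stochastic gradient makes the synchronous
coupling of two SGD steps, started at `θ` and `η` and driven by the same noise, contract in
mean: `E‖θ₁ - η₁‖ ≤ (1 - γ(2 - γL)μ/2) ‖θ - η‖`, because the noise is centred and `f'` is
strongly monotone. Hence `R_γ` maps `K`-Lipschitz functions to `rK`-Lipschitz ones with `r < 1`,
and stationarity gives `|R_γ^k φ(θ) - π_γ(φ)| ≤ K rᵏ (‖θ‖ + ∫ ‖·‖ dπ_γ)`. The Poisson series
thus converges geometrically with `Krⁱ`-Lipschitz terms: its sum is `K/(1 - r)`-Lipschitz, and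
integrating it term by term against `R_γ(θ, ·)` and `π_γ` gives the Poisson equation and
`π_γ(ψ_γ) = 0`. The difference of two solutions is a Lipschitz fixed point of `R_γ` with mean
zero, so it is bounded by `C rᵏ` for every `k`, i.e. it vanishes.
-/

section LipschitzIntegrable

variable {X : Type*} [NormedAddCommGroup X]

theorem lipschitzWith_toNNReal_of_abs_sub_le {φ : X → ℝ} {K : ℝ}
    (h : ∀ x y, |φ x - φ y| ≤ K * ‖x - y‖) : LipschitzWith K.toNNReal φ :=
  LipschitzWith.of_dist_le' fun x y => by simpa [Real.dist_eq, dist_eq_norm] using h x y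

theorem LipschitzWith.abs_sub_le {φ : X → ℝ} {K : ℝ≥0} (h : LipschitzWith K φ) (x y : X) :
    |φ x - φ y| ≤ K * ‖x - y‖ := by
  simpa [Real.norm_eq_abs] using h.norm_sub_le x y

theorem LipschitzWith.abs_le_add {φ : X → ℝ} {K : ℝ≥0} (h : LipschitzWith K φ) (x : X) :
    |φ x| ≤ |φ 0| + K * ‖x‖ := by
  have := h.abs_sub_le x 0
  rw [sub_zero] at this
  linarith [abs_sub_abs_le_abs_sub (φ x) (φ 0)]

variable [MeasurableSpace X] [BorelSpace X]

theorem LipschitzWith.integrable_of_integrable_norm {μ : Measure X} [IsFiniteMeasure μ]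
    {K : ℝ≥0} {φ : X → ℝ} (hφ : LipschitzWith K φ) (hμ : Integrable (fun x => ‖x‖) μ) :
    Integrable φ μ :=
  ((integrable_const |φ 0|).add (hμ.const_mul K)).mono' hφ.continuous.aestronglyMeasurable
    (ae_of_all _ fun x => hφ.abs_le_add x)

theorem LipschitzWith.abs_sub_integral_le {μ : Measure X} [IsProbabilityMeasure μ]
    {K : ℝ≥0} {φ : X → ℝ} (hφ : LipschitzWith K φ) (hμ : Integrable (fun x => ‖x‖) μ)
    (x : X) : |φ x - ∫ y, φ y ∂μ| ≤ K * (‖x‖ + ∫ y, ‖y‖ ∂μ) := by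
  have hφμ := hφ.integrable_of_integrable_norm hμ
  calc |φ x - ∫ y, φ y ∂μ| = |∫ y, (φ x - φ y) ∂μ| := by
        rw [integral_sub (integrable_const _) hφμ, integral_const, probReal_univ, one_smul]
    _ ≤ ∫ y, K * (‖x‖ + ‖y‖) ∂μ := by
        refine (abs_integral_le_integral_abs).trans (integral_mono
          ((integrable_const _).sub hφμ).abs (((integrable_const _).add hμ).const_mul _) ?_)
        intro y
        exact (hφ.abs_sub_le x y).trans
          (mul_le_mul_of_nonneg_left (_root_.norm_sub_le x y) K.coe_nonneg)
    _ = K * (‖x‖ + ∫ y, ‖y‖ ∂μ) := by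
        rw [integral_const_mul, integral_add (integrable_const _) hμ, integral_const,
          probReal_univ, one_smul]

end LipschitzIntegrable

theorem MeasureTheory.Measure.integral_bind_kernel {α β E : Type*} [MeasurableSpace α]
    [MeasurableSpace β] [NormedAddCommGroup E] [NormedSpace ℝ E] {μ : Measure α}
    {κ : Kernel α β} {f : β → E} (hf : Integrable f (κ ∘ₘ μ)) :
    ∫ y, f y ∂(κ ∘ₘ μ) = ∫ x, ∫ y, f y ∂κ x ∂μ := by
  rw [Measure.comp_eq_comp_const_apply] at hf ⊢
  simpa using Kernel.integral_comp hf

theorem MeasureTheory.integrable_of_lintegral_nnnorm_sq_lt_top {α E : Type*} [MeasurableSpace α]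
    [NormedAddCommGroup E] {μ : Measure α} [IsFiniteMeasure μ] {f : α → E}
    (hf : AEStronglyMeasurable f μ) (h : ∫⁻ a, (‖f a‖₊ : ℝ≥0∞) ^ 2 ∂μ < ⊤) : Integrable f μ := by
  refine MemLp.integrable one_le_two ⟨hf, ?_⟩
  rw [eLpNorm_lt_top_iff_lintegral_rpow_enorm_lt_top two_ne_zero ENNReal.ofNat_ne_top]
  simpa [enorm_eq_nnnorm] using h

section MarkovOperator

variable {X : Type*} [NormedAddCommGroup X] [MeasurableSpace X]

def markovOp (κ : Kernel X X) (ψ : X → ℝ) (x : X) : ℝ := ∫ y, ψ y ∂κ x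

/-- By Kantorovich–Rubinstein duality, this says that `κ` contracts the Wasserstein-1
distance by the factor `r`. -/
structure LipschitzContracting (κ : Kernel X X) (r : ℝ≥0) : Prop where
  integrable_norm : ∀ x, Integrable (fun y => ‖y‖) (κ x)
  lipschitzWith_markovOp : ∀ ⦃K : ℝ≥0⦄ ⦃ψ : X → ℝ⦄,
    LipschitzWith K ψ → LipschitzWith (K * r) (markovOp κ ψ)

variable {κ : Kernel X X} {r : ℝ≥0} {K : ℝ≥0} {ψ : X → ℝ}

namespace LipschitzContracting

theorem lipschitzWith_markovOp_iterate (hκ : LipschitzContracting κ r)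
    (hψ : LipschitzWith K ψ) (k : ℕ) : LipschitzWith (K * r ^ k) ((markovOp κ)^[k] ψ) := by
  induction k generalizing K ψ with
  | zero => simpa using hψ
  | succ k ih =>
    rw [Function.iterate_succ_apply, pow_succ', ← mul_assoc]
    exact ih (hκ.lipschitzWith_markovOp hψ)

variable [BorelSpace X] {μ : Measure X} [IsProbabilityMeasure μ]

theorem integrable_norm_bind (hκ : LipschitzContracting κ r)
    (hμ : Integrable (fun x => ‖x‖) μ) : Integrable (fun y => ‖y‖) (κ ∘ₘ μ) := by
  rw [Measure.integrable_comp_iff continuous_norm.aestronglyMeasurable]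
  refine ⟨ae_of_all _ hκ.integrable_norm, ?_⟩
  simp only [norm_norm]
  exact (hκ.lipschitzWith_markovOp lipschitzWith_one_norm).integrable_of_integrable_norm hμ

variable [IsMarkovKernel κ]

theorem integral_bind (hκ : LipschitzContracting κ r) (hμ : Integrable (fun x => ‖x‖) μ)
    (hψ : LipschitzWith K ψ) : ∫ y, ψ y ∂(κ ∘ₘ μ) = ∫ x, markovOp κ ψ x ∂μ :=
  Measure.integral_bind_kernel (hψ.integrable_of_integrable_norm (hκ.integrable_norm_bind hμ))

theorem integral_markovOp_iterate_of_invariant (hκ : LipschitzContracting κ r)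
    (hμ : Integrable (fun x => ‖x‖) μ) (hinv : κ ∘ₘ μ = μ) (hψ : LipschitzWith K ψ) (k : ℕ) :
    ∫ x, (markovOp κ)^[k] ψ x ∂μ = ∫ x, ψ x ∂μ := by
  induction k generalizing K ψ with
  | zero => rfl
  | succ k ih =>
    rw [Function.iterate_succ_apply, ih (hκ.lipschitzWith_markovOp hψ),
      ← hκ.integral_bind hμ hψ, hinv]

theorem abs_markovOp_iterate_sub_integral_le (hκ : LipschitzContracting κ r)
    (hμ : Integrable (fun x => ‖x‖) μ) (hinv : κ ∘ₘ μ = μ) (hψ : LipschitzWith K ψ)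
    (k : ℕ) (x : X) :
    |(markovOp κ)^[k] ψ x - ∫ y, ψ y ∂μ| ≤ K * (‖x‖ + ∫ y, ‖y‖ ∂μ) * r ^ k := by
  rw [← hκ.integral_markovOp_iterate_of_invariant hμ hinv hψ k]
  have := (hκ.lipschitzWith_markovOp_iterate hψ k).abs_sub_integral_le hμ x
  push_cast at this
  linarith

end LipschitzContracting

end MarkovOperator

section PoissonSeries

variable {X : Type*} [NormedAddCommGroup X] [MeasurableSpace X] [BorelSpace X]
  {κ : Kernel X X} [IsMarkovKernel κ] {r : ℝ≥0} {π : Measure X} [IsProbabilityMeasure π]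
  {K : ℝ≥0} {φ : X → ℝ}

def poissonSeries (κ : Kernel X X) (π : Measure X) (φ : X → ℝ) (x : X) : ℝ :=
  ∑' i, ((markovOp κ)^[i] φ x - ∫ y, φ y ∂π)

namespace LipschitzContracting

theorem summable_markovOp_iterate_sub_integral (hκ : LipschitzContracting κ r) (hr : r < 1)
    (hπ : Integrable (fun x => ‖x‖) π) (hinv : κ ∘ₘ π = π) (hφ : LipschitzWith K φ) (x : X) :
    Summable fun i => (markovOp κ)^[i] φ x - ∫ y, φ y ∂π :=
  Summable.of_norm_bounded ((summable_geometric_of_lt_one r.coe_nonneg hr).mul_left _)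
    fun i => hκ.abs_markovOp_iterate_sub_integral_le hπ hinv hφ i x

theorem lipschitzWith_poissonSeries (hκ : LipschitzContracting κ r) (hr : r < 1)
    (hπ : Integrable (fun x => ‖x‖) π) (hinv : κ ∘ₘ π = π) (hφ : LipschitzWith K φ) :
    LipschitzWith (K * (1 - r)⁻¹) (poissonSeries κ π φ) := by
  refine LipschitzWith.of_dist_le_mul fun x y => ?_
  have hsum := hκ.summable_markovOp_iterate_sub_integral hr hπ hinv hφ
  have hgeom := (hasSum_geometric_of_lt_one r.coe_nonneg hr).mul_left ((K : ℝ) * dist x y)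
  rw [dist_eq_norm, poissonSeries, poissonSeries, ← (hsum x).tsum_sub (hsum y)]
  calc _ ≤ (K : ℝ) * dist x y * (1 - (r : ℝ))⁻¹ := by
        refine tsum_of_norm_bounded hgeom fun i => ?_
        rw [Real.norm_eq_abs, sub_sub_sub_cancel_right, mul_right_comm, dist_eq_norm]
        exact (hκ.lipschitzWith_markovOp_iterate hφ i).abs_sub_le x y
    _ = _ := by
        push_cast [NNReal.coe_sub hr.le]
        ring

theorem integral_poissonSeries (hκ : LipschitzContracting κ r) (hr : r < 1)
    (hπ : Integrable (fun x => ‖x‖) π) (hinv : κ ∘ₘ π = π) (hφ : LipschitzWith K φ)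
    {μ : Measure X} [IsProbabilityMeasure μ] (hμ : Integrable (fun x => ‖x‖) μ) :
    ∫ x, poissonSeries κ π φ x ∂μ = ∑' i, ∫ x, ((markovOp κ)^[i] φ x - ∫ y, φ y ∂π) ∂μ := by
  have hint : ∀ i, Integrable (fun x => (markovOp κ)^[i] φ x - ∫ y, φ y ∂π) μ := fun i =>
    ((hκ.lipschitzWith_markovOp_iterate hφ i).integrable_of_integrable_norm hμ).sub
      (integrable_const _)
  have hbound : Integrable (fun x => K * (‖x‖ + ∫ y, ‖y‖ ∂π)) μ :=
    (hμ.add (integrable_const _)).const_mul _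
  refine (integral_tsum_of_summable_integral_norm hint ?_).symm
  refine Summable.of_nonneg_of_le (fun i => integral_nonneg fun x => norm_nonneg _)
    (fun i => ?_) ((summable_geometric_of_lt_one r.coe_nonneg hr).mul_left
      (∫ x, K * (‖x‖ + ∫ y, ‖y‖ ∂π) ∂μ))
  rw [← integral_mul_const]
  exact integral_mono (hint i).norm (hbound.mul_const _)
    fun x => hκ.abs_markovOp_iterate_sub_integral_le hπ hinv hφ i x

theorem markovOp_poissonSeries (hκ : LipschitzContracting κ r) (hr : r < 1)
    (hπ : Integrable (fun x => ‖x‖) π) (hinv : κ ∘ₘ π = π) (hφ : LipschitzWith K φ) (x : X) :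
    markovOp κ (poissonSeries κ π φ) x = poissonSeries κ π φ x - (φ x - ∫ y, φ y ∂π) := by
  have hstep : ∀ i, ∫ y, ((markovOp κ)^[i] φ y - ∫ y, φ y ∂π) ∂κ x
      = (markovOp κ)^[i + 1] φ x - ∫ y, φ y ∂π := fun i => by
    rw [integral_sub ((hκ.lipschitzWith_markovOp_iterate hφ i).integrable_of_integrable_norm
      (hκ.integrable_norm x)) (integrable_const _), integral_const, probReal_univ, one_smul,
      Function.iterate_succ_apply']
    rfl
  rw [markovOp, hκ.integral_poissonSeries hr hπ hinv hφ (hκ.integrable_norm x),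
    tsum_congr hstep, poissonSeries,
    (hκ.summable_markovOp_iterate_sub_integral hr hπ hinv hφ x).tsum_eq_zero_add]
  simp

theorem integral_poissonSeries_eq_zero (hκ : LipschitzContracting κ r) (hr : r < 1)
    (hπ : Integrable (fun x => ‖x‖) π) (hinv : κ ∘ₘ π = π) (hφ : LipschitzWith K φ) :
    ∫ x, poissonSeries κ π φ x ∂π = 0 := by
  rw [hκ.integral_poissonSeries hr hπ hinv hφ hπ]
  refine (tsum_congr fun i => ?_).trans tsum_zero
  rw [integral_sub ((hκ.lipschitzWith_markovOp_iterate hφ i).integrable_of_integrable_norm hπ)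
    (integrable_const _), integral_const, probReal_univ, one_smul,
    hκ.integral_markovOp_iterate_of_invariant hπ hinv hφ, sub_self]

theorem eq_zero_of_markovOp_eq_self (hκ : LipschitzContracting κ r) (hr : r < 1)
    (hπ : Integrable (fun x => ‖x‖) π) (hinv : κ ∘ₘ π = π) {g : X → ℝ}
    (hg : LipschitzWith K g) (hfix : markovOp κ g = g) (hmean : ∫ x, g x ∂π = 0) : g = 0 := by
  funext x
  have hle : ∀ k, |g x| ≤ K * (‖x‖ + ∫ y, ‖y‖ ∂π) * r ^ k := fun k => by
    simpa [Function.iterate_fixed hfix, hmean] using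
      hκ.abs_markovOp_iterate_sub_integral_le hπ hinv hg k x
  have hlim := (tendsto_pow_atTop_nhds_zero_of_lt_one r.coe_nonneg hr).const_mul
    (K * (‖x‖ + ∫ y, ‖y‖ ∂π))
  rw [mul_zero] at hlim
  exact abs_nonpos_iff.1 (ge_of_tendsto' hlim hle)

theorem eq_poissonSeries (hκ : LipschitzContracting κ r) (hr : r < 1)
    (hπ : Integrable (fun x => ‖x‖) π) (hinv : κ ∘ₘ π = π) (hφ : LipschitzWith K φ)
    {K' : ℝ≥0} {ψ : X → ℝ} (hψ : LipschitzWith K' ψ)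
    (hpoisson : ∀ x, ψ x - markovOp κ ψ x = φ x - ∫ y, φ y ∂π) (hmean : ∫ x, ψ x ∂π = 0) :
    ψ = poissonSeries κ π φ := by
  have hlip := hκ.lipschitzWith_poissonSeries hr hπ hinv hφ
  refine sub_eq_zero.1 (hκ.eq_zero_of_markovOp_eq_self hr hπ hinv (hψ.sub hlip) ?_ ?_)
  · funext x
    have hint := fun {K : ℝ≥0} {g : X → ℝ} (hg : LipschitzWith K g) =>
      hg.integrable_of_integrable_norm (hκ.integrable_norm x)
    change ∫ y, (ψ y - poissonSeries κ π φ y) ∂κ x = ψ x - poissonSeries κ π φ x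
    rw [integral_sub (hint hψ) (hint hlip)]
    have h₁ := hpoisson x
    have h₂ := hκ.markovOp_poissonSeries hr hπ hinv hφ x
    unfold markovOp at h₁ h₂
    linarith
  · change ∫ x, (ψ x - poissonSeries κ π φ x) ∂π = 0
    rw [integral_sub (hψ.integrable_of_integrable_norm hπ) (hlip.integrable_of_integrable_norm hπ),
      hmean, hκ.integral_poissonSeries_eq_zero hr hπ hinv hφ, sub_zero]

end LipschitzContracting

end PoissonSeries

section Cocoercive

variable {E : Type*} [NormedAddCommGroup E] [InnerProductSpace ℝ E] {L γ : ℝ} {u w : E}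

theorem norm_le_mul_norm_of_sq_le_inner (hL : 0 ≤ L) (h : ‖w‖ ^ 2 ≤ L * ⟪w, u⟫) :
    ‖w‖ ≤ L * ‖u‖ := by
  have hcs := mul_le_mul_of_nonneg_left (real_inner_le_norm w u) hL
  by_contra! hlt
  have hw : 0 < ‖w‖ := lt_of_le_of_lt (by positivity) hlt
  nlinarith [mul_lt_mul_of_pos_left hlt hw]

theorem norm_sub_smul_sq_le_of_sq_le_inner (h : ‖w‖ ^ 2 ≤ L * ⟪w, u⟫) :
    ‖u - γ • w‖ ^ 2 ≤ ‖u‖ ^ 2 - γ * (2 - γ * L) * ⟪w, u⟫ := by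
  rw [norm_sub_sq_real, real_inner_smul_right, norm_smul, mul_pow, Real.norm_eq_abs, sq_abs,
    real_inner_comm]
  nlinarith [mul_le_mul_of_nonneg_left h (sq_nonneg γ)]

end Cocoercive

section RandomMap

variable {Ω X : Type*} [MeasurableSpace Ω] {P : Measure Ω}
  [NormedAddCommGroup X] [MeasurableSpace X] [BorelSpace X] {G : Ω → X → X}

theorem lipschitzContracting_of_coupling [IsFiniteMeasure P] {κ : Kernel X X} {r : ℝ≥0}
    (hκ : ∀ x, κ x = P.map (G · x)) (hG : ∀ x, Integrable (G · x) P)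
    (hcoupling : ∀ x y, ∫ ω, ‖G ω x - G ω y‖ ∂P ≤ r * ‖x - y‖) :
    LipschitzContracting κ r where
  integrable_norm x := by
    rw [hκ x, integrable_map_measure continuous_norm.aestronglyMeasurable (hG x).aemeasurable]
    exact (hG x).norm
  lipschitzWith_markovOp K ψ hψ := by
    have hint : ∀ x, Integrable (fun ω => ψ (G ω x)) P := fun x =>
      ((integrable_const |ψ 0|).add ((hG x).norm.const_mul K)).mono'
        (hψ.continuous.comp_aestronglyMeasurable (hG x).1)
        (ae_of_all _ fun ω => hψ.abs_le_add _)
    have hop : ∀ x, markovOp κ ψ x = ∫ ω, ψ (G ω x) ∂P := fun x => by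
      rw [markovOp, hκ x, integral_map (hG x).aemeasurable hψ.continuous.aestronglyMeasurable]
    refine LipschitzWith.of_dist_le_mul fun x y => ?_
    rw [Real.dist_eq, hop, hop, ← integral_sub (hint x) (hint y), dist_eq_norm, NNReal.coe_mul,
      mul_assoc]
    calc |∫ ω, (ψ (G ω x) - ψ (G ω y)) ∂P| ≤ ∫ ω, K * ‖G ω x - G ω y‖ ∂P :=
          abs_integral_le_integral_abs.trans <| integral_mono ((hint x).sub (hint y)).abs
            (((hG x).sub (hG y)).norm.const_mul K) fun ω => hψ.abs_sub_le _ _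
      _ ≤ K * (r * ‖x - y‖) := by
          rw [integral_const_mul]
          exact mul_le_mul_of_nonneg_left (hcoupling x y) K.coe_nonneg

theorem measurable_map_of_ae_continuous [SecondCountableTopology X] [SFinite P]
    (hmeas : ∀ x, Measurable (G · x))
    (hcont : ∀ᵐ ω ∂P, Continuous (G ω)) : Measurable fun x => P.map (G · x) := by
  classical
  obtain ⟨N, hN, hNm, hPN⟩ := exists_measurable_superset_of_null (ae_iff.1 hcont)
  -- modified on a null set, `G` is continuous in `x` for all `ω`, hence jointly measurable
  let G' : X → Ω → X := fun x ω => if ω ∈ N then x else G ω x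
  have hG' : Measurable (Function.uncurry G') := by
    refine measurable_uncurry_of_continuous_of_measurable (fun ω => ?_)
      fun x => Measurable.ite hNm measurable_const (hmeas x)
    by_cases hω : ω ∈ N
    · simpa [G', hω] using continuous_id'
    · simpa [G', hω] using not_not.1 fun h => hω (hN h)
  have heq : ∀ x, P.map (G · x) = (P.map (Prod.mk x)).map (Function.uncurry G') := fun x => by
    rw [Measure.map_map hG' measurable_prodMk_left]
    refine Measure.map_congr ?_
    filter_upwards [measure_eq_zero_iff_ae_notMem.1 hPN] with ω hω
    simp [G', hω]
  simp_rw [heq]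
  exact (Measure.measurable_map _ hG').comp Measurable.map_prodMk_left

end RandomMap

namespace SGDFormal

section StrongConvexity

variable {d : ℕ} {f : Vec d → ℝ} {f' : Vec d → Vec d} {m : ℝ}

theorem StrongConvexC.convexOn_line (hf : StrongConvexC f m) (y v : Vec d) :
    ConvexOn ℝ Set.univ fun t : ℝ => f (y + t • v) - m / 2 * t ^ 2 * ‖v‖ ^ 2 := by
  refine ⟨convex_univ, fun s _ t _ a b ha hb hab => ?_⟩
  obtain rfl : b = 1 - a := by linarith
  have key := hf (y + s • v) (y + t • v) a ⟨ha, by linarith⟩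
  have hpt : y + (a * s + (1 - a) * t) • v = a • (y + s • v) + (1 - a) • (y + t • v) := by
    simp only [add_smul, mul_smul, smul_add, sub_smul, one_smul]
    abel
  rw [add_sub_add_left_eq_sub, ← sub_smul, norm_smul, Real.norm_eq_abs, mul_pow, sq_abs] at key
  simp only [smul_eq_mul]
  rw [hpt]
  linear_combination key

theorem StrongConvexC.mul_sq_norm_sub_le_inner (hf : StrongConvexC f m)
    (hgrad : ∀ θ, HasGradientAt f (f' θ) θ) (θ η : Vec d) :
    m * ‖θ - η‖ ^ 2 ≤ ⟪f' θ - f' η, θ - η⟫ := by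
  set v := θ - η
  have hderiv : ∀ t : ℝ, HasDerivAt (fun t : ℝ => f (η + t • v) - m / 2 * t ^ 2 * ‖v‖ ^ 2)
      (⟪f' (η + t • v), v⟫ - m * t * ‖v‖ ^ 2) t := fun t => by
    have hline : HasDerivAt (fun t : ℝ => η + t • v) v t := by
      simpa using ((hasDerivAt_id t).smul_const v).const_add η
    have hquad := ((hasDerivAt_pow 2 t).const_mul (m / 2)).mul_const (‖v‖ ^ 2)
    refine (((hgrad _).hasFDerivAt.comp_hasDerivAt t hline).sub hquad).congr_deriv ?_
    simp only [InnerProductSpace.toDual_apply_apply]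
    ring
  have hmono := (hf.convexOn_line η v).monotoneOn_deriv
    (fun t _ => (hderiv t).differentiableAt) (Set.mem_univ 0) (Set.mem_univ 1) zero_le_one
  rw [(hderiv 0).deriv, (hderiv 1).deriv] at hmono
  simp only [zero_smul, add_zero, one_smul, mul_zero, zero_mul, sub_zero, mul_one] at hmono
  rw [inner_sub_left]
  have : η + v = θ := add_sub_cancel η θ
  rw [this] at hmono
  linarith

end StrongConvexity


section SGDStep

variable {d : ℕ} {Ω : Type*} {f' : Vec d → Vec d} {ε : ℕ → Vec d → Ω → Vec d} {γ L m : ℝ}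

def sgdStep (f' : Vec d → Vec d) (ε : ℕ → Vec d → Ω → Vec d) (γ : ℝ) (ω : Ω) (θ : Vec d) :
    Vec d :=
  θ - γ • (f' θ + ε 1 θ ω)

theorem sgdStep_sub_sgdStep (ω : Ω) (θ η : Vec d) :
    sgdStep f' ε γ ω θ - sgdStep f' ε γ ω η =
      (θ - η) - γ • ((f' θ + ε 1 θ ω) - (f' η + ε 1 η ω)) := by
  simp only [sgdStep, smul_sub]
  abel

variable [MeasurableSpace Ω] {P : Measure Ω}

def StochGradCocoercive (P : Measure Ω) (f' : Vec d → Vec d) (ε : ℕ → Vec d → Ω → Vec d)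
    (L : ℝ) : Prop :=
  ∀ᵐ ω ∂P, ∀ θ η : Vec d, ‖(f' θ + ε 1 θ ω) - (f' η + ε 1 η ω)‖ ^ 2 ≤
    L * ⟪(f' θ + ε 1 θ ω) - (f' η + ε 1 η ω), θ - η⟫

namespace StochGradCocoercive

theorem ae_continuous_sgdStep (hco : StochGradCocoercive P f' ε L) (hL : 0 ≤ L) :
    ∀ᵐ ω ∂P, Continuous (sgdStep f' ε γ ω) := by
  filter_upwards [hco] with ω hω
  refine (LipschitzWith.of_dist_le' (K := 1 + |γ| * L) fun θ η => ?_).continuous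
  rw [dist_eq_norm, dist_eq_norm, sgdStep_sub_sgdStep]
  calc _ ≤ ‖θ - η‖ + |γ| * ‖(f' θ + ε 1 θ ω) - (f' η + ε 1 η ω)‖ := by
        rw [← Real.norm_eq_abs, ← norm_smul]
        exact norm_sub_le _ _
    _ ≤ ‖θ - η‖ + |γ| * (L * ‖θ - η‖) := by
        gcongr
        exact norm_le_mul_norm_of_sq_le_inner hL (hω θ η)
    _ = (1 + |γ| * L) * ‖θ - η‖ := by ring

theorem integrable_noise [IsFiniteMeasure P] (hco : StochGradCocoercive P f' ε L) (hL : 0 ≤ L)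
    (hf' : ∀ θ η, ‖f' θ - f' η‖ ≤ L * ‖θ - η‖) (hεm : ∀ θ, AEStronglyMeasurable (ε 1 θ) P)
    {θ₀ : Vec d} (h₀ : Integrable (ε 1 θ₀) P) (θ : Vec d) : Integrable (ε 1 θ) P := by
  refine ((integrable_const (2 * L * ‖θ - θ₀‖)).add h₀.norm).mono' (hεm θ) ?_
  filter_upwards [hco] with ω hω
  have hΔ := norm_le_mul_norm_of_sq_le_inner hL (hω θ θ₀)
  calc ‖ε 1 θ ω‖
      = ‖((f' θ + ε 1 θ ω) - (f' θ₀ + ε 1 θ₀ ω)) - (f' θ - f' θ₀) + ε 1 θ₀ ω‖ := by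
        congr 1; abel
    _ ≤ ‖(f' θ + ε 1 θ ω) - (f' θ₀ + ε 1 θ₀ ω)‖ + ‖f' θ - f' θ₀‖ + ‖ε 1 θ₀ ω‖ :=
        (norm_add_le _ _).trans (add_le_add_left (norm_sub_le _ _) _)
    _ ≤ 2 * L * ‖θ - θ₀‖ + ‖ε 1 θ₀ ω‖ := by linarith [hf' θ θ₀]

theorem integral_norm_sgdStep_sub_le [IsProbabilityMeasure P]
    (hco : StochGradCocoercive P f' ε L) (hε : ∀ θ, Integrable (ε 1 θ) P)
    (hmean : ∀ θ, ∫ ω, ε 1 θ ω ∂P = 0) (hγ : 0 ≤ γ) (hγL : γ * L ≤ 2)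
    (hmono : ∀ θ η, m * ‖θ - η‖ ^ 2 ≤ ⟪f' θ - f' η, θ - η⟫) (θ η : Vec d) :
    ∫ ω, ‖sgdStep f' ε γ ω θ - sgdStep f' ε γ ω η‖ ∂P ≤
      (1 - γ * (2 - γ * L) * m / 2) * ‖θ - η‖ := by
  set c := γ * (2 - γ * L)
  have hc : 0 ≤ c := mul_nonneg hγ (by linarith)
  set a := ‖θ - η‖
  have hgrad : ∀ ϑ, Integrable (fun ω => f' ϑ + ε 1 ϑ ω) P := fun ϑ =>
    (integrable_const _).add (hε ϑ)
  have hΔ : Integrable (fun ω => (f' θ + ε 1 θ ω) - (f' η + ε 1 η ω)) P :=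
    (hgrad θ).sub (hgrad η)
  have hstep : Integrable (fun ω => sgdStep f' ε γ ω θ - sgdStep f' ε γ ω η) P := by
    simp only [sgdStep_sub_sgdStep]
    exact (integrable_const _).sub (hΔ.smul γ)
  have hinner : ∫ ω, ⟪(f' θ + ε 1 θ ω) - (f' η + ε 1 η ω), θ - η⟫ ∂P = ⟪f' θ - f' η, θ - η⟫ := by
    simp_rw [real_inner_comm (θ - η)]
    rw [integral_inner hΔ, integral_sub (hgrad θ) (hgrad η), integral_add (integrable_const _)
      (hε θ), integral_add (integrable_const _) (hε η), hmean, hmean]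
    simp
  -- `2 a b ≤ a² + b²` turns the bound on `b²` into one that is linear in `b`
  have hpointwise : ∀ᵐ ω ∂P, a * ‖sgdStep f' ε γ ω θ - sgdStep f' ε γ ω η‖ ≤
      a ^ 2 - c / 2 * ⟪(f' θ + ε 1 θ ω) - (f' η + ε 1 η ω), θ - η⟫ := by
    filter_upwards [hco] with ω hω
    have hsq := norm_sub_smul_sq_le_of_sq_le_inner (γ := γ) (hω θ η)
    rw [sgdStep_sub_sgdStep]
    nlinarith [sq_nonneg (a - ‖θ - η - γ • (f' θ + ε 1 θ ω - (f' η + ε 1 η ω))‖)]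
  have hmul : a * ∫ ω, ‖sgdStep f' ε γ ω θ - sgdStep f' ε γ ω η‖ ∂P ≤
      a ^ 2 - c / 2 * ⟪f' θ - f' η, θ - η⟫ := by
    have hX : Integrable (fun ω => c / 2 * ⟪(f' θ + ε 1 θ ω) - (f' η + ε 1 η ω), θ - η⟫) P :=
      (hΔ.inner_const (θ - η)).const_mul (c / 2)
    have hbound : Integrable
        (fun ω => a ^ 2 - c / 2 * ⟪(f' θ + ε 1 θ ω) - (f' η + ε 1 η ω), θ - η⟫) P :=
      (integrable_const _).sub hX
    rw [← integral_const_mul]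
    refine (integral_mono_ae (hstep.norm.const_mul a) hbound hpointwise).trans_eq ?_
    rw [integral_sub (integrable_const _) hX, integral_const_mul, hinner, integral_const,
      probReal_univ, one_smul]
  rcases (norm_nonneg (θ - η)).eq_or_lt with ha | ha
  · obtain rfl : θ = η := sub_eq_zero.1 (norm_eq_zero.1 ha.symm)
    simp [a]
  · refine le_of_mul_le_mul_left ?_ ha
    nlinarith [mul_le_mul_of_nonneg_left (hmono θ η) hc]

end StochGradCocoercive

end SGDStep


section SGDKernel

variable {d : ℕ} {Ω : Type*} [MeasurableSpace Ω] {P : Measure Ω} {ℱ : ℕ → MeasurableSpace Ω}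
  {f' : Vec d → Vec d} {ε : ℕ → Vec d → Ω → Vec d} {θstar : Vec d} {γ L τ : ℝ}

theorem H3.measurable_noise (h3 : H3 P ℱ ε) (θ : Vec d) : Measurable (ε 1 θ) := by
  obtain ⟨-, hle, hmeas, -⟩ := h3
  exact (hmeas 0 θ).mono (hle 1) le_rfl

theorem H3.integral_noise_eq_zero [IsFiniteMeasure P] (h3 : H3 P ℱ ε) (θ : Vec d) :
    ∫ ω, ε 1 θ ω ∂P = 0 := by
  obtain ⟨-, hle, -, hcond, -⟩ := h3
  rw [← integral_condExp (hle 0)]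
  exact (integral_congr_ae (hcond 0 θ)).trans (integral_zero _ _)

theorem H4.stochGradCocoercive {p : ℕ} (h4 : H4 P f' ε θstar L p τ) :
    StochGradCocoercive P f' ε L :=
  h4.1 1 le_rfl

theorem H4.integrable_noise [IsFiniteMeasure P] (h4 : H4 P f' ε θstar L 2 τ)
    (hmeas : Measurable (ε 1 θstar)) : Integrable (ε 1 θstar) P :=
  integrable_of_lintegral_nnnorm_sq_lt_top hmeas.aestronglyMeasurable
    ((h4.2.2 1 le_rfl).trans_lt ENNReal.ofReal_lt_top)

theorem exists_kernel_Rstep_lipschitzContracting [IsProbabilityMeasure P] {f : Vec d → ℝ}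
    {m : ℝ} (hm : 0 < m) (hL : 0 < L) (h1 : StrongConvexC f m) (h2 : H2 f f' L)
    (h3 : H3 P ℱ ε) (h4 : H4 P f' ε θstar L 2 τ) (hγ : γ ∈ Set.Ioo (0 : ℝ) (2 / L)) :
    ∃ (κ : Kernel (Vec d) (Vec d)) (r : ℝ≥0),
      ⇑κ = Rstep P f' ε γ ∧ IsMarkovKernel κ ∧ LipschitzContracting κ r ∧ r < 1 := by
  obtain ⟨hγ0, hγ2⟩ := hγ
  obtain ⟨-, hgrad, -, hf'⟩ := h2
  have hγL : γ * L < 2 := (lt_div_iff₀ hL).1 hγ2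
  have hco := h4.stochGradCocoercive
  have hε : ∀ θ, Integrable (ε 1 θ) P :=
    hco.integrable_noise hL.le hf' (fun θ => (h3.measurable_noise θ).aestronglyMeasurable)
      (h4.integrable_noise (h3.measurable_noise θstar))
  have hstep : ∀ θ, Integrable (sgdStep f' ε γ · θ) P := fun θ =>
    (integrable_const θ).sub (((integrable_const _).add (hε θ)).smul γ)
  have hR : Measurable (Rstep P f' ε γ) :=
    measurable_map_of_ae_continuous
      (fun θ => measurable_const.sub ((measurable_const.add (h3.measurable_noise θ)).const_smul γ))
      (hco.ae_continuous_sgdStep hL.le)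
  refine ⟨⟨Rstep P f' ε γ, hR⟩, (1 - γ * (2 - γ * L) * m / 2).toNNReal, rfl,
    ⟨fun θ => Measure.isProbabilityMeasure_map (hstep θ).aemeasurable⟩,
    lipschitzContracting_of_coupling (fun θ => rfl) hstep fun θ η => ?_, ?_⟩
  · exact (hco.integral_norm_sgdStep_sub_le hε h3.integral_noise_eq_zero hγ0.le hγL.le
      (h1.mul_sq_norm_sub_le_inner hgrad) θ η).trans
      (mul_le_mul_of_nonneg_right (Real.le_coe_toNNReal _) (norm_nonneg _))
  · have : 0 < γ * (2 - γ * L) * m := mul_pos (mul_pos hγ0 (by linarith)) hm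
    rw [Real.toNNReal_lt_one]
    linarith

variable {κ : Kernel (Vec d) (Vec d)} {r : ℝ≥0}

theorem Riter_succ (hκR : ⇑κ = Rstep P f' ε γ) (k : ℕ) (θ : Vec d) :
    Riter P f' ε γ (k + 1) θ = κ ∘ₘ Riter P f' ε γ k θ := by
  rw [hκR]
  rfl

variable [IsMarkovKernel κ]

theorem isProbabilityMeasure_Riter (hκR : ⇑κ = Rstep P f' ε γ) (k : ℕ) (θ : Vec d) :
    IsProbabilityMeasure (Riter P f' ε γ k θ) := by
  induction k with
  | zero => exact Measure.dirac.isProbabilityMeasure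
  | succ k ih => rw [Riter_succ hκR]; infer_instance

theorem integrable_norm_Riter (hκR : ⇑κ = Rstep P f' ε γ) (hκ : LipschitzContracting κ r)
    (k : ℕ) (θ : Vec d) : Integrable (fun x => ‖x‖) (Riter P f' ε γ k θ) := by
  induction k with
  | zero => exact integrable_dirac (by simp)
  | succ k ih =>
    have := isProbabilityMeasure_Riter hκR k θ
    rw [Riter_succ hκR]
    exact hκ.integrable_norm_bind ih

theorem integral_Riter (hκR : ⇑κ = Rstep P f' ε γ) (hκ : LipschitzContracting κ r)
    {K : ℝ≥0} {ψ : Vec d → ℝ} (hψ : LipschitzWith K ψ) (k : ℕ) (θ : Vec d) :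
    ∫ ϑ, ψ ϑ ∂(Riter P f' ε γ k θ) = (markovOp κ)^[k] ψ θ := by
  induction k generalizing K ψ with
  | zero => exact integral_dirac ψ θ
  | succ k ih =>
    have := isProbabilityMeasure_Riter hκR k θ
    rw [Riter_succ hκR, hκ.integral_bind (integrable_norm_Riter hκR hκ k θ) hψ,
      ih (hκ.lipschitzWith_markovOp hψ), Function.iterate_succ_apply]

end SGDKernel

theorem poisson_solution_lipschitz_general
    {d : ℕ} {Ω : Type*} [MeasurableSpace Ω]
    (P : Measure Ω) [IsProbabilityMeasure P] (ℱ : ℕ → MeasurableSpace Ω)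
    (f : Vec d → ℝ) (f' : Vec d → Vec d) (ε : ℕ → Vec d → Ω → Vec d)
    (θstar : Vec d) (m L τ : ℝ) (hm : 0 < m) (hL : 0 < L)
    (h1 : StrongConvexC f m) (h2 : H2 f f' L)
    (h3 : H3 P ℱ ε) (h4 : H4 P f' ε θstar L 2 τ)
    (γ : ℝ) (hγ : γ ∈ Set.Ioo (0 : ℝ) (2 / L))
    (π : Measure (Vec d)) (hπ : IsProbabilityMeasure π) (hπ2 : FiniteSecondMoment π)
    (hπstat : IsStationary P f' ε γ π)
    (φ : Vec d → ℝ) (Lφ : ℝ) (hφ : ∀ x y : Vec d, |φ x - φ y| ≤ Lφ * ‖x - y‖) :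
    (∀ θ : Vec d,
      Summable fun i : ℕ => (∫ ϑ, φ ϑ ∂(Riter P f' ε γ i θ)) - ∫ ϑ, φ ϑ ∂π) ∧
    (∃ K : ℝ, ∀ x y : Vec d,
      |poisson P f' ε γ π φ x - poisson P f' ε γ π φ y| ≤ K * ‖x - y‖) ∧
    (∀ θ : Vec d,
      poisson P f' ε γ π φ θ - (∫ ϑ, poisson P f' ε γ π φ ϑ ∂(Rstep P f' ε γ θ)) =
        φ θ - ∫ ϑ, φ ϑ ∂π) ∧
    (∫ θ, poisson P f' ε γ π φ θ ∂π = 0) ∧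
    ∀ ψ' : Vec d → ℝ, (∃ K' : ℝ, ∀ x y : Vec d, |ψ' x - ψ' y| ≤ K' * ‖x - y‖) →
      (∀ θ : Vec d,
        ψ' θ - (∫ ϑ, ψ' ϑ ∂(Rstep P f' ε γ θ)) = φ θ - ∫ ϑ, φ ϑ ∂π) →
      (∫ θ, ψ' θ ∂π = 0) → ψ' = poisson P f' ε γ π φ := by
  obtain ⟨κ, r, hκR, _, hκ, hr⟩ := exists_kernel_Rstep_lipschitzContracting hm hL h1 h2 h3 h4 hγ
  have hπ1 : Integrable (fun x => ‖x‖) π :=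
    (integrable_of_lintegral_nnnorm_sq_lt_top aestronglyMeasurable_id hπ2).norm
  have hinv : κ ∘ₘ π = π := by rw [hκR]; exact hπstat
  have hφ' := lipschitzWith_toNNReal_of_abs_sub_le hφ
  have hRiter := integral_Riter hκR hκ hφ'
  have hpoisson : poisson P f' ε γ π φ = poissonSeries κ π φ :=
    funext fun θ => tsum_congr fun i => by rw [hRiter]
  simp only [hRiter, hpoisson, ← hκR]
  refine ⟨hκ.summable_markovOp_iterate_sub_integral hr hπ1 hinv hφ',
    ⟨_, (hκ.lipschitzWith_poissonSeries hr hπ1 hinv hφ').abs_sub_le⟩, fun θ => ?_,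
    hκ.integral_poissonSeries_eq_zero hr hπ1 hinv hφ', fun ψ ⟨K', hK'⟩ =>
      hκ.eq_poissonSeries hr hπ1 hinv hφ' (lipschitzWith_toNNReal_of_abs_sub_le hK')⟩
  have := hκ.markovOp_poissonSeries hr hπ1 hinv hφ' θ
  unfold markovOp at this
  linarith

/-- Lemma 11: existence, Lipschitz continuity and uniqueness of the Poisson
solution associated with a Lipschitz function `φ`. -/
theorem poisson_solution_lipschitz
    {d : ℕ} {Ω : Type*} [MeasurableSpace Ω]
    (P : Measure Ω) [IsProbabilityMeasure P] (ℱ : ℕ → MeasurableSpace Ω)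
    (f : Vec d → ℝ) (f' : Vec d → Vec d) (ε : ℕ → Vec d → Ω → Vec d)
    (θstar : Vec d) (m L τ : ℝ) (hm : 0 < m) (hL : 0 < L)
    (h1 : StrongConvexC f m) (h2 : H2 f f' L) (hmin : IsMinimizer f θstar)
    (h3 : H3 P ℱ ε) (h4 : H4 P f' ε θstar L 2 τ)
    (γ : ℝ) (hγ : γ ∈ Set.Ioo (0 : ℝ) (2 / L))
    (π : Measure (Vec d)) (hπ : IsProbabilityMeasure π) (hπ2 : FiniteSecondMoment π)
    (hπstat : IsStationary P f' ε γ π)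
    (φ : Vec d → ℝ) (Lφ : ℝ) (hφ : ∀ x y : Vec d, |φ x - φ y| ≤ Lφ * ‖x - y‖) :
    (∀ θ : Vec d,
      Summable fun i : ℕ => (∫ ϑ, φ ϑ ∂(Riter P f' ε γ i θ)) - ∫ ϑ, φ ϑ ∂π) ∧
    (∃ K : ℝ, ∀ x y : Vec d,
      |poisson P f' ε γ π φ x - poisson P f' ε γ π φ y| ≤ K * ‖x - y‖) ∧
    (∀ θ : Vec d,
      poisson P f' ε γ π φ θ - (∫ ϑ, poisson P f' ε γ π φ ϑ ∂(Rstep P f' ε γ θ)) =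
        φ θ - ∫ ϑ, φ ϑ ∂π) ∧
    (∫ θ, poisson P f' ε γ π φ θ ∂π = 0) ∧
    ∀ ψ' : Vec d → ℝ, (∃ K' : ℝ, ∀ x y : Vec d, |ψ' x - ψ' y| ≤ K' * ‖x - y‖) →
      (∀ θ : Vec d,
        ψ' θ - (∫ ϑ, ψ' ϑ ∂(Rstep P f' ε γ θ)) = φ θ - ∫ ϑ, φ ϑ ∂π) →
      (∫ θ, ψ' θ ∂π = 0) → ψ' = poisson P f' ε γ π φ :=
  poisson_solution_lipschitz_general P ℱ f f' ε θstar m L τ hm hL h1 h2 h3 h4 γ hγ π hπ hπ2 hπstat φ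
    Lφ hφ

end SGDFormal
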